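/- arXiv:1601.03031 — 4 statements merged into one kernel-verified Lean document; each statement's English description precedes it below -/
import Mathlib

section
/- Splitting Lemma: Let U ⊆ ℍ be open and let f : U → ℍ be slice regular. Then for every I ∈ 𝕊 and every J ∈ 𝕊 orthogonal to I (as vectors in the 3-space of imaginary quaternions), there exist two holomorphic functions F, G : U ∩ ℂ_I → ℂ_I (i.e., satisfying (∂/∂x + I ∂/∂y)F = 0 and (∂/∂x + I ∂/∂y)G = 0 and taking values in ℂ_I) such that for every z = x + Iy ∈ U ∩ ℂ_I one has f(z) = F(z) + G(z)J. -/
open MeasureTheory Filter Set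
open scoped ENNReal

noncomputable section

notation "ℍ" => Quaternion ℝ

instance : MeasurableSpace ℍ := borel ℍ
instance : BorelSpace ℍ := ⟨rfl⟩

/-- The 2-sphere `𝕊` of imaginary units of `ℍ`. -/
def Sph : Set ℍ := {q | q ^ 2 = -1}

/-- The point `x + I y` of the slice `ℂ_I`, for `z = (x, y)`. -/
def toSlice (I : ℍ) (z : ℝ × ℝ) : ℍ := (z.1 : ℍ) + z.2 • I

/-- The slice (complex plane) `ℂ_I = {x + I y : x, y ∈ ℝ}`. -/
def CPlane (I : ℍ) : Set ℍ := Set.range (toSlice I)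

/-- `f` is (left) slice regular on the open set `U ⊆ ℍ`: it is real differentiable on `U`
and for every imaginary unit `I` its restriction to `U ∩ ℂ_I` satisfies
`(∂/∂x + I ∂/∂y) f(x + I y) = 0`. -/
def SliceRegularOn (f : ℍ → ℍ) (U : Set ℍ) : Prop :=
  (∀ q ∈ U, DifferentiableAt ℝ f q) ∧
  ∀ I ∈ Sph, ∀ q ∈ U ∩ CPlane I, fderiv ℝ f q 1 + I * fderiv ℝ f q I = 0

/-- `f` is holomorphic on the slice `U ∩ ℂ_J`: it is real differentiable there (as a function of
the slice coordinates `(x,y)`) and satisfies `(∂/∂x + J ∂/∂y) f(x + J y) = 0`. -/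
def HolOnSlice (f : ℍ → ℍ) (J : ℍ) (U : Set ℍ) : Prop :=
  ∀ z : ℝ × ℝ, toSlice J z ∈ U →
    DifferentiableAt ℝ (fun w => f (toSlice J w)) z ∧
    fderiv ℝ (fun w => f (toSlice J w)) z (1, 0)
      + J * fderiv ℝ (fun w => f (toSlice J w)) z (0, 1) = 0

/-- Axially symmetric subset of `ℍ`. -/
def AxSymm (U : Set ℍ) : Prop :=
  ∀ x y : ℝ, ∀ I ∈ Sph, (x : ℍ) + y • I ∈ U → ∀ J ∈ Sph, (x : ℍ) + y • J ∈ U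

/-- s-domain: a domain whose intersection with every slice `ℂ_I` is connected. -/
def IsSDomain (U : Set ℍ) : Prop :=
  IsOpen U ∧ IsConnected U ∧ ∀ I ∈ Sph, IsConnected (U ∩ CPlane I)

/-- The open unit ball `𝔹` of `ℍ`. -/
def B1 : Set ℍ := Metric.ball 0 1

/-- The point `r e^{Iθ} = r cos θ + (r sin θ) I`. -/
def circleQ (I : ℍ) (r θ : ℝ) : ℍ := ((r * Real.cos θ : ℝ) : ℍ) + (r * Real.sin θ) • I

/-- `∫_0^{2π} |f(r e^{Iθ})|^p dθ`. -/
def circIntP (f : ℍ → ℍ) (p : ℝ) (I : ℍ) (r : ℝ) : ℝ :=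
  ∫ θ in (0:ℝ)..(2 * Real.pi), ‖f (circleQ I r θ)‖ ^ p

/-- Membership in the Hardy space `H^p(𝔹)`: `f` is slice regular on `𝔹` and the limits as
`r → 1⁻` of `∫_0^{2π} |f(r e^{Iθ})|^p dθ` exist and are uniformly bounded over `I ∈ 𝕊`. -/
def HardyMem (f : ℍ → ℍ) (p : ℝ) : Prop :=
  SliceRegularOn f B1 ∧ ∃ M : ℝ, ∀ I ∈ Sph, ∃ L : ℝ, L ≤ M ∧
    Tendsto (fun r => circIntP f p I r) (nhdsWithin 1 (Set.Iio 1)) (nhds L)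

/-- `∥f∥_p^p = sup_{I ∈ 𝕊} lim_{r→1⁻} ∫_0^{2π} |f(r e^{Iθ})|^p dθ`. -/
def hardyNormP (f : ℍ → ℍ) (p : ℝ) : ℝ :=
  sSup {L | ∃ I ∈ Sph, Tendsto (fun r => circIntP f p I r) (nhdsWithin 1 (Set.Iio 1)) (nhds L)}

/-- `μ` is a Carleson measure for `H^p(𝔹)`. -/
def IsCarlesonHardy (μ : Measure ℍ) (p : ℝ) : Prop :=
  ∃ C : ℝ, 0 < C ∧ ∀ f : ℍ → ℍ, HardyMem f p →
    ∫⁻ q in B1, ENNReal.ofReal (‖f q‖ ^ p) ∂μ ≤ ENNReal.ofReal (C * hardyNormP f p)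

/-- `μ` is a slice Carleson measure for `H^p(𝔹)`: for every `I ∈ 𝕊`, the restriction `μ_I`
of `μ` to `𝔹_I = 𝔹 ∩ ℂ_I` satisfies the Carleson inequality. -/
def IsSliceCarlesonHardy (μ : Measure ℍ) (p : ℝ) : Prop :=
  ∃ C : ℝ, 0 < C ∧ ∀ I ∈ Sph, ∀ f : ℍ → ℍ, HardyMem f p →
    ∫⁻ q in B1 ∩ CPlane I, ENNReal.ofReal (‖f q‖ ^ p) ∂μ ≤ ENNReal.ofReal (C * hardyNormP f p)

/-- The Carleson box `S_I(θ₀, r) ⊆ 𝔹_I`. -/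
def carlesonBox (I : ℍ) (θ₀ r : ℝ) : Set ℍ :=
  {q | ∃ ρ θ : ℝ, r ≤ ρ ∧ ρ < 1 ∧ |θ - θ₀| ≤ 1 - r ∧ q = circleQ I ρ θ}

/-- The symmetric box `S(θ₀, r) = ⋃_{I ∈ 𝕊} S_I(θ₀, r)`. -/
def symmBox (θ₀ r : ℝ) : Set ℍ := ⋃ I ∈ Sph, carlesonBox I θ₀ r

/-- The open unit disc of `ℝ²` (parametrizing `𝔹_I`). -/
def unitDisc2 : Set (ℝ × ℝ) := {z | z.1 ^ 2 + z.2 ^ 2 < 1}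

/-- `∫_{𝔹_I} |f|^p dλ`, `λ` the 2-dimensional Lebesgue measure on `ℂ_I`. -/
def sliceIntP (f : ℍ → ℍ) (p : ℝ) (I : ℍ) : ℝ≥0∞ :=
  ∫⁻ z in unitDisc2, ENNReal.ofReal (‖f (toSlice I z)‖ ^ p)

/-- `∥f∥_{𝒜^p}^p = sup_{I ∈ 𝕊} ∫_{𝔹_I} |f|^p dλ`. -/
def bergNormP (f : ℍ → ℍ) (p : ℝ) : ℝ≥0∞ := ⨆ I ∈ Sph, sliceIntP f p I

/-- Membership in the Bergman space `𝒜^p(𝔹)`. -/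
def BergMem (f : ℍ → ℍ) (p : ℝ) : Prop := SliceRegularOn f B1 ∧ bergNormP f p < ⊤

/-- `μ` is a Carleson measure for `𝒜^p(𝔹)`. -/
def IsCarlesonBerg (μ : Measure ℍ) (p : ℝ) : Prop :=
  ∃ C : ℝ, 0 < C ∧ ∀ f : ℍ → ℍ, BergMem f p →
    ∫⁻ q in B1, ENNReal.ofReal (‖f q‖ ^ p) ∂μ ≤ ENNReal.ofReal C * bergNormP f p

/-- `μ` is a slice Carleson measure for `𝒜^p(𝔹)`. -/
def IsSliceCarlesonBerg (μ : Measure ℍ) (p : ℝ) : Prop :=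
  ∃ C : ℝ, 0 < C ∧ ∀ I ∈ Sph, ∀ f : ℍ → ℍ, BergMem f p →
    ∫⁻ q in B1 ∩ CPlane I, ENNReal.ofReal (‖f q‖ ^ p) ∂μ ≤ ENNReal.ofReal C * bergNormP f p

/-- The pseudohyperbolic distance
`ρ(q,α) = |(1 − 2Re(α)q + |α|²q²)⁻¹ (−α + q(1+α²) − q²α)| = |(1 − qᾱ)^{−*} * (q − α)|`. -/
def pRho (q α : ℍ) : ℝ :=
  ‖(1 - (2 * α.re) • q + (‖α‖ ^ 2) • q ^ 2)⁻¹ * (-α + q * (1 + α ^ 2) - q ^ 2 * α)‖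

/-- The pseudohyperbolic ball `B(α, r)`. -/
def pBall (α : ℍ) (r : ℝ) : Set ℍ := {q ∈ B1 | pRho q α < r}

/-- The pseudohyperbolic disc `Δ_I(α,r) = {z ∈ 𝔹_I : |z − α| < r |1 − zᾱ|}`. -/
def pDisc (I : ℍ) (α : ℍ) (r : ℝ) : Set ℍ :=
  {z | z ∈ B1 ∧ z ∈ CPlane I ∧ ‖z - α‖ < r * ‖1 - z * star α‖}

/-- The axially symmetric completion of a set `S ⊆ ℍ`. -/
def axComp (S : Set ℍ) : Set ℍ := {q | ∃ s ∈ S, q.re = s.re ∧ ‖q.im‖ = ‖s.im‖}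

/-- The 2-dimensional Lebesgue area, on the slice `ℂ_I`, of a subset of `ℂ_I`. -/
def sliceArea (I : ℍ) (S : Set ℍ) : ℝ≥0∞ := volume (toSlice I ⁻¹' S)

/-- The 4-dimensional Lebesgue measure on `ℍ ≅ ℝ⁴`. -/
def quatVol : Measure ℍ :=
  Measure.map (fun p : ℝ × ℝ × ℝ × ℝ => (⟨p.1, p.2.1, p.2.2.1, p.2.2.2⟩ : ℍ)) volume

/-- The 4-dimensional Lebesgue measure `η`, normalized so that `η(𝔹) = 1`. -/
def etaMeasure : Measure ℍ := (quatVol B1)⁻¹ • quatVol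

/-- The 2-sphere `[α]` of points with the same real part and the same modulus as `α`. -/
def qSphere (α : ℍ) : Set ℍ := {q | ∃ J ∈ Sph, q = (α.re : ℍ) + ‖α.im‖ • J}

/-- The 2-dimensional Lebesgue measure of the slice `ℂ_i`, restricted to `𝔹`,
regarded as a Borel measure on `ℍ`. -/
def sliceLeb (i : ℍ) : Measure ℍ := (Measure.map (toSlice i) volume).restrict B1

/-!
For `I ∈ 𝕊`, `P q = (q - I q I) / 2` and `Q q = (q + I q I) / 2` (`sliceProj`, `sliceProjCompl`)
are the orthogonal projections of `ℍ` onto `ℂ_I` and onto its orthogonal complement `ℂ_I J`;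
both commute with left multiplication by `I`. Post-composing with an `ℝ`-linear map that
commutes with left multiplication by `I` preserves the equation `(∂/∂x + I ∂/∂y) g = 0`, so
`F = P f` and `G = -(Q f) J` are holomorphic on the slice, and `F + G J = P f + Q f = f`
because `J² = -1`. Finally `G` has values in `ℂ_I`, the centralizer of `I`.
-/

theorem mem_Sph_iff {I : ℍ} : I ∈ Sph ↔ I.re = 0 ∧ Quaternion.normSq I = 1 := by
  constructor
  · intro hI
    have hn : Quaternion.normSq I = 1 := by
      have h := congrArg Quaternion.normSq (hI : I ^ 2 = -1)
      simp only [map_pow, Quaternion.normSq_neg, map_one] at h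
      exact (pow_eq_one_iff_of_nonneg Quaternion.normSq_nonneg two_ne_zero).mp h
    refine ⟨Quaternion.sq_eq_neg_normSq.mp ?_, hn⟩
    rw [hn, Quaternion.coe_one]; exact hI
  · rintro ⟨hre, hn⟩
    show I ^ 2 = -1
    rw [Quaternion.sq_eq_neg_normSq.mpr hre, hn, Quaternion.coe_one]

theorem mul_self_eq_neg_one_of_mem_Sph {I : ℍ} (hI : I ∈ Sph) : I * I = -1 := by
  rw [← sq]; exact hI

theorem mul_comm_eq_neg_of_re_mul_star_eq_zero {I J : ℍ} (hI : I.re = 0) (hJ : J.re = 0)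
    (h : (I * star J).re = 0) : J * I = -(I * J) := by
  have hstar : star (I * J) = J * I := by
    rw [star_mul, Quaternion.star_eq_neg.mpr hI, Quaternion.star_eq_neg.mpr hJ, neg_mul_neg]
  have hre : (I * J).re = 0 := by
    rw [Quaternion.star_eq_neg.mpr hJ, mul_neg, Quaternion.re_neg, neg_eq_zero] at h
    exact h
  rw [← hstar, eq_neg_iff_add_eq_zero, add_comm, Quaternion.self_add_star, hre]
  simp

def sliceProj (I : ℍ) : ℍ →L[ℝ] ℍ :=
  (1 / 2 : ℝ) • (ContinuousLinearMap.id ℝ ℍ - ContinuousLinearMap.mulLeftRight ℝ ℍ I I)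

def sliceProjCompl (I : ℍ) : ℍ →L[ℝ] ℍ :=
  (1 / 2 : ℝ) • (ContinuousLinearMap.id ℝ ℍ + ContinuousLinearMap.mulLeftRight ℝ ℍ I I)

@[simp] theorem sliceProj_apply (I q : ℍ) : sliceProj I q = (1 / 2 : ℝ) • (q - I * q * I) := rfl

@[simp] theorem sliceProjCompl_apply (I q : ℍ) :
    sliceProjCompl I q = (1 / 2 : ℝ) • (q + I * q * I) := rfl

theorem sliceProj_add_sliceProjCompl (I q : ℍ) : sliceProj I q + sliceProjCompl I q = q := by
  simp only [sliceProj_apply, sliceProjCompl_apply]; module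

theorem sliceProj_eq_toSlice {I : ℍ} (hI : I ∈ Sph) (q : ℍ) :
    sliceProj I q = toSlice I (q.re, inner ℝ q I) := by
  obtain ⟨hre, hn⟩ := mem_Sph_iff.mp hI
  rw [Quaternion.normSq_def', hre] at hn
  ext <;> simp only [sliceProj_apply, toSlice, Quaternion.inner_def, smul_eq_mul,
    Quaternion.re_smul, Quaternion.re_sub, Quaternion.re_add, Quaternion.re_mul, Quaternion.re_coe,
    Quaternion.re_star, Quaternion.imI_smul, Quaternion.imI_sub, Quaternion.imI_add,
    Quaternion.imI_mul, Quaternion.imI_coe, Quaternion.imI_star, Quaternion.imJ_smul,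
    Quaternion.imJ_sub, Quaternion.imJ_add, Quaternion.imJ_mul, Quaternion.imJ_coe,
    Quaternion.imJ_star, Quaternion.imK_smul, Quaternion.imK_sub, Quaternion.imK_add,
    Quaternion.imK_mul, Quaternion.imK_coe, Quaternion.imK_star, hre]
  · linear_combination (q.re / 2) * hn
  · linear_combination (-q.imI / 2) * hn
  · linear_combination (-q.imJ / 2) * hn
  · linear_combination (-q.imK / 2) * hn

theorem sliceProj_mem_CPlane {I : ℍ} (hI : I ∈ Sph) (q : ℍ) : sliceProj I q ∈ CPlane I :=
  ⟨_, (sliceProj_eq_toSlice hI q).symm⟩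

theorem mem_CPlane_of_commute {I u : ℍ} (hI : I ∈ Sph) (h : Commute I u) : u ∈ CPlane I := by
  have hproj : sliceProj I u = u := by
    rw [sliceProj_apply, h.eq, mul_assoc, mul_self_eq_neg_one_of_mem_Sph hI, mul_neg_one]
    module
  exact hproj ▸ sliceProj_mem_CPlane hI u

theorem sliceProj_mul_left {I : ℍ} (hI : I ∈ Sph) (q : ℍ) :
    sliceProj I (I * q) = I * sliceProj I q := by
  have hII := mul_self_eq_neg_one_of_mem_Sph hI
  simp only [sliceProj_apply, mul_smul_comm, mul_sub, ← mul_assoc, hII]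

theorem sliceProjCompl_mul_left {I : ℍ} (hI : I ∈ Sph) (q : ℍ) :
    sliceProjCompl I (I * q) = I * sliceProjCompl I q := by
  have hII := mul_self_eq_neg_one_of_mem_Sph hI
  simp only [sliceProjCompl_apply, mul_smul_comm, mul_add, ← mul_assoc, hII]

theorem mul_sliceProjCompl {I : ℍ} (hI : I ∈ Sph) (q : ℍ) :
    I * sliceProjCompl I q = -(sliceProjCompl I q * I) := by
  have hII := mul_self_eq_neg_one_of_mem_Sph hI
  simp only [sliceProjCompl_apply, mul_smul_comm, smul_mul_assoc, mul_add, add_mul, ← mul_assoc,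
    hII]
  rw [mul_assoc _ I I, hII, neg_one_mul, mul_neg_one, neg_mul]
  module

def toSliceCLM (I : ℍ) : ℝ × ℝ →L[ℝ] ℍ :=
  (ContinuousLinearMap.fst ℝ ℝ ℝ).smulRight 1 + (ContinuousLinearMap.snd ℝ ℝ ℝ).smulRight I

theorem coe_toSliceCLM (I : ℍ) : ⇑(toSliceCLM I) = toSlice I := by
  funext z
  simp [toSliceCLM, toSlice, ← Quaternion.coe_one, Quaternion.smul_coe]

theorem SliceRegularOn.holOnSlice {f : ℍ → ℍ} {U : Set ℍ} (hf : SliceRegularOn f U) {I : ℍ}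
    (hI : I ∈ Sph) : HolOnSlice f I U := by
  intro z hz
  have hderiv : HasFDerivAt (fun w => f (toSlice I w))
      ((fderiv ℝ f (toSlice I z)).comp (toSliceCLM I)) z := by
    have hslice : HasFDerivAt (toSlice I) (toSliceCLM I) z :=
      coe_toSliceCLM I ▸ (toSliceCLM I).hasFDerivAt
    exact (hf.1 _ hz).hasFDerivAt.comp z hslice
  refine ⟨hderiv.differentiableAt, ?_⟩
  have hx : toSliceCLM I (1, 0) = 1 := by simp [coe_toSliceCLM, toSlice]
  have hy : toSliceCLM I (0, 1) = I := by simp [coe_toSliceCLM, toSlice]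
  rw [hderiv.fderiv, ContinuousLinearMap.comp_apply, ContinuousLinearMap.comp_apply, hx, hy]
  exact hf.2 I hI _ ⟨hz, z, rfl⟩

theorem HolOnSlice.clm_comp {f : ℍ → ℍ} {I : ℍ} {U : Set ℍ} (hf : HolOnSlice f I U)
    (L : ℍ →L[ℝ] ℍ) (hL : ∀ q, L (I * q) = I * L q) : HolOnSlice (fun q => L (f q)) I U := by
  intro z hz
  obtain ⟨hdiff, hCR⟩ := hf z hz
  have hderiv : HasFDerivAt (fun w => L (f (toSlice I w)))
      (L.comp (fderiv ℝ (fun w => f (toSlice I w)) z)) z :=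
    L.hasFDerivAt.comp z hdiff.hasFDerivAt
  refine ⟨hderiv.differentiableAt, ?_⟩
  rw [hderiv.fderiv, ContinuousLinearMap.comp_apply, ContinuousLinearMap.comp_apply, ← hL,
    ← map_add, hCR, map_zero]

theorem HolOnSlice.mul_const {f : ℍ → ℍ} {I : ℍ} {U : Set ℍ} (hf : HolOnSlice f I U) (c : ℍ) :
    HolOnSlice (fun q => f q * c) I U :=
  hf.clm_comp ((ContinuousLinearMap.mul ℝ ℍ).flip c) fun q => mul_assoc I q c

theorem splitting_lemma_general (U : Set ℍ) (f : ℍ → ℍ)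
    (hf : SliceRegularOn f U) (I : ℍ) (hI : I ∈ Sph) (J : ℍ) (hJ : J ∈ Sph)
    (hIJ : (I * star J).re = 0) :
    ∃ F G : ℍ → ℍ,
      HolOnSlice F I U ∧ HolOnSlice G I U ∧
      (∀ q ∈ U ∩ CPlane I, F q ∈ CPlane I) ∧
      (∀ q ∈ U ∩ CPlane I, G q ∈ CPlane I) ∧
      ∀ q ∈ U ∩ CPlane I, f q = F q + G q * J := by
  have hfI : HolOnSlice f I U := hf.holOnSlice hI
  have hJI : J * I = -(I * J) :=
    mul_comm_eq_neg_of_re_mul_star_eq_zero (mem_Sph_iff.mp hI).1 (mem_Sph_iff.mp hJ).1 hIJ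
  refine ⟨fun q => sliceProj I (f q), fun q => sliceProjCompl I (f q) * -J,
    hfI.clm_comp _ (sliceProj_mul_left hI),
    (hfI.clm_comp _ (sliceProjCompl_mul_left hI)).mul_const _,
    fun q _ => sliceProj_mem_CPlane hI _, fun q _ => mem_CPlane_of_commute hI ?_, fun q _ => ?_⟩
  · -- `sliceProjCompl I (f q)` and `J` both anticommute with `I`
    show I * (sliceProjCompl I (f q) * -J) = sliceProjCompl I (f q) * -J * I
    rw [← mul_assoc, mul_sliceProjCompl hI, mul_assoc _ (-J), neg_mul J, hJI]
    noncomm_ring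
  · rw [mul_assoc, neg_mul, mul_self_eq_neg_one_of_mem_Sph hJ, neg_neg, mul_one,
      sliceProj_add_sliceProjCompl]

/-- **Splitting Lemma.** If `f` is slice regular on an open set `U ⊆ ℍ`, then for every `I ∈ 𝕊`
and every `J ∈ 𝕊` orthogonal to `I`, there are holomorphic functions `F, G : U ∩ ℂ_I → ℂ_I`
such that `f = F + G J` on `U ∩ ℂ_I`. -/
theorem splitting_lemma (U : Set ℍ) (hU : IsOpen U) (f : ℍ → ℍ)
    (hf : SliceRegularOn f U) (I : ℍ) (hI : I ∈ Sph) (J : ℍ) (hJ : J ∈ Sph)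
    (hIJ : (I * star J).re = 0) :
    ∃ F G : ℍ → ℍ,
      HolOnSlice F I U ∧ HolOnSlice G I U ∧
      (∀ q ∈ U ∩ CPlane I, F q ∈ CPlane I) ∧
      (∀ q ∈ U ∩ CPlane I, G q ∈ CPlane I) ∧
      ∀ q ∈ U ∩ CPlane I, f q = F q + G q * J :=
  splitting_lemma_general U f hf I hI J hJ hIJ
end
end

section
/- Let f be slice regular on an open set U′ ⊆ ℍ and g be slice regular on an open set U ⊆ ℍ with g(U) ⊆ U′, and assume g is quaternionic intrinsic, i.e., g(U ∩ ℂ_I) ⊆ ℂ_I for every I ∈ 𝕊. Then the composition q ↦ f(g(q)) is slice regular on U. -/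
open MeasureTheory Filter Set
open scoped ENNReal

noncomputable section

/-! At a point of `ℂ_I`, the slice Cauchy–Riemann equation `L 1 + I L I = 0` for the real
differential `L` says exactly that `L` commutes with left multiplication by `I` on `ℂ_I`. Since `g`
maps `U ∩ ℂ_I` into `ℂ_I`, its differential maps the tangent cone `ℂ_I` into itself, so by the chain
rule the differential of `f ∘ g` is a composition of two such maps. -/

open Topology

section TangentCone

variable {𝕜 E F : Type*} [NontriviallyNormedField 𝕜]
  [NormedAddCommGroup E] [NormedSpace 𝕜 E] [NormedAddCommGroup F] [NormedSpace 𝕜 F]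

theorem Submodule.subset_tangentConeAt {V : Submodule 𝕜 E} {x : E} (hx : x ∈ V) :
    (V : Set E) ⊆ tangentConeAt 𝕜 V x := fun _ hv =>
  mem_tangentConeAt_of_add_smul_mem (l := 𝓝[≠] 0) (c := id) tendsto_id
    (Eventually.of_forall fun t => V.add_mem hx (V.smul_mem t hv))

theorem Submodule.tangentConeAt_subset {V : Submodule 𝕜 E} (hV : IsClosed (V : Set E))
    {x : E} (hx : x ∈ V) : tangentConeAt 𝕜 V x ⊆ V := by
  rw [tangentConeAt_eq_biInter_closure]
  refine (biInter_subset_of_mem univ_mem).trans (closure_minimal ?_ hV)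
  rintro _ ⟨c, -, d, ⟨-, hd⟩, rfl⟩
  exact V.smul_mem c ((V.add_mem_iff_right hx).mp hd)

theorem HasFDerivAt.mapsTo_submodule {f : E → F} {f' : E →L[𝕜] F} {x : E} {U : Set E}
    {V : Submodule 𝕜 E} {W : Submodule 𝕜 F} (hf : HasFDerivAt f f' x) (hW : IsClosed (W : Set F))
    (hU : U ∈ 𝓝 x) (hx : x ∈ V) (hmaps : MapsTo f (U ∩ V) W) : MapsTo f' V W := by
  intro v hv
  have hcone : v ∈ tangentConeAt 𝕜 (V ∩ U) x := by
    rw [tangentConeAt_inter_nhds hU]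
    exact V.subset_tangentConeAt hx hv
  refine W.tangentConeAt_subset hW (hmaps ⟨mem_of_mem_nhds hU, hx⟩) ?_
  refine tangentConeAt_mono ?_ (hf.hasFDerivWithinAt.mapsTo_tangent_cone hcone)
  rintro _ ⟨y, ⟨hyV, hyU⟩, rfl⟩
  exact hmaps ⟨hyU, hyV⟩

end TangentCone

theorem mem_Sph_iff_mul_self {I : ℍ} : I ∈ Sph ↔ I * I = -1 := by
  rw [Sph, mem_ofPred_eq, sq]

theorem add_mul_eq_zero_iff_eq_mul {R : Type*} [Ring R] {I a b : R} (hI : I * I = -1) :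
    a + I * b = 0 ↔ b = I * a := by
  constructor
  · intro h
    have := congrArg (I * ·) h
    simp only [mul_add, ← mul_assoc, hI, neg_one_mul, mul_zero] at this
    rw [add_neg_eq_zero] at this
    exact this.symm
  · rintro rfl
    rw [← mul_assoc, hI, neg_one_mul, add_neg_cancel]

def slicePlane (I : ℍ) : Submodule ℝ ℍ := Submodule.span ℝ {1, I}

theorem coe_slicePlane (I : ℍ) : (slicePlane I : Set ℍ) = CPlane I := by
  ext q
  simp [slicePlane, Submodule.mem_span_pair, CPlane, toSlice, ← Quaternion.coe_mul_eq_smul]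

theorem isClosed_slicePlane (I : ℍ) : IsClosed (slicePlane I : Set ℍ) :=
  (slicePlane I).closed_of_finiteDimensional

theorem one_mem_slicePlane (I : ℍ) : (1 : ℍ) ∈ slicePlane I :=
  Submodule.subset_span (mem_insert 1 _)

theorem map_mul_left_of_map_eq_mul {I : ℍ} (hI : I * I = -1) {L : ℍ →L[ℝ] ℍ}
    (hL : L I = I * L 1) {v : ℍ} (hv : v ∈ slicePlane I) : L (I * v) = I * L v := by
  obtain ⟨x, y, rfl⟩ := Submodule.mem_span_pair.mp hv
  simp only [mul_add, mul_smul_comm, mul_one, hI, map_add, map_smul, hL, ← mul_assoc,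
    neg_one_mul, map_neg, smul_neg]

theorem comp_slice_regular_general (U' U : Set ℍ) (hU : IsOpen U)
    (f g : ℍ → ℍ) (hf : SliceRegularOn f U') (hg : SliceRegularOn g U)
    (hrange : g '' U ⊆ U')
    (hintr : ∀ I ∈ Sph, g '' (U ∩ CPlane I) ⊆ CPlane I) :
    SliceRegularOn (fun q => f (g q)) U := by
  refine ⟨fun q hq => (hf.1 (g q) (hrange ⟨q, hq, rfl⟩)).comp q (hg.1 q hq), ?_⟩
  intro I hI q hq
  have hII := mem_Sph_iff_mul_self.mp hI
  have hgq : g q ∈ U' ∩ CPlane I := ⟨hrange ⟨q, hq.1, rfl⟩, hintr I hI ⟨q, hq, rfl⟩⟩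
  set A := fderiv ℝ g q
  set B := fderiv ℝ f (g q)
  have hA : A I = I * A 1 := (add_mul_eq_zero_iff_eq_mul hII).mp (hg.2 I hI q hq)
  have hB : B I = I * B 1 := (add_mul_eq_zero_iff_eq_mul hII).mp (hf.2 I hI _ hgq)
  have hA_slice : MapsTo A (slicePlane I) (slicePlane I) := by
    refine (hg.1 q hq.1).hasFDerivAt.mapsTo_submodule (isClosed_slicePlane I) (hU.mem_nhds hq.1)
      (by rw [← SetLike.mem_coe, coe_slicePlane]; exact hq.2) ?_
    rw [coe_slicePlane]
    exact fun p hp => hintr I hI ⟨p, hp, rfl⟩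
  rw [fderiv_fun_comp q (hf.1 _ hgq.1) (hg.1 q hq.1), ContinuousLinearMap.comp_apply,
    ContinuousLinearMap.comp_apply, add_mul_eq_zero_iff_eq_mul hII]
  calc B (A I) = B (A (I * 1)) := by rw [mul_one]
    _ = B (I * A 1) := by rw [map_mul_left_of_map_eq_mul hII hA (one_mem_slicePlane I)]
    _ = I * B (A 1) := map_mul_left_of_map_eq_mul hII hB (hA_slice (one_mem_slicePlane I))

/-- The composition `f ∘ g` of slice regular functions is slice regular
whenever `g` is quaternionic intrinsic. -/
theorem comp_slice_regular (U' U : Set ℍ) (hU' : IsOpen U') (hU : IsOpen U)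
    (f g : ℍ → ℍ) (hf : SliceRegularOn f U') (hg : SliceRegularOn g U)
    (hrange : g '' U ⊆ U')
    (hintr : ∀ I ∈ Sph, g '' (U ∩ CPlane I) ⊆ CPlane I) :
    SliceRegularOn (fun q => f (g q)) U :=
  comp_slice_regular_general U' U hU f g hf hg hrange hintr

end
end

section
/- There exists a constant C₁ > 0 such that for every α ∈ 𝔹, every r ∈ (0,1) and every q in the pseudohyperbolic ball B(α,r), one has ((1 − r)/C₁)·(1 − |α|) ≤ 1 − |q| ≤ (C₁/(1 − r))·(1 − |α|); that is, the Euclidean distances of q and of α to ∂𝔹 are comparable with constants (1 − r)/C₁ and C₁/(1 − r). -/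
/-!
Conjugating `q` by `u = 1 - qα` turns the slice-regular Möbius quotient into the classical one:
`ρ(q, α) = |p - α| / |1 - pᾱ|` with `p = u⁻¹ q u`, so `|p| = |q|`. The identity
`|1 - pᾱ|² - |p - α|² = (1 - |p|²)(1 - |α|²)` together with `|1 - pᾱ| ≥ 1 - |p||α|` gives
`||q| - |α|| ≤ ρ(q, α) (1 - |q||α|)`. For `ρ < r` this yields
`(1 - r)(1 - |q|) ≤ (1 + r)(1 - |α|)` and the same with `q` and `α` swapped, so `C₁ = 2` works.
-/

open MeasureTheory Filter Set
open scoped ENNReal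

noncomputable section

lemma norm_one_sub_mul_star_sq_sub_norm_sub_sq (p α : ℍ) :
    ‖1 - p * star α‖ ^ 2 - ‖p - α‖ ^ 2 = (1 - ‖p‖ ^ 2) * (1 - ‖α‖ ^ 2) := by
  have hinner : inner ℝ (1 : ℍ) (p * star α) = inner ℝ p α := by
    rw [Quaternion.inner_def, Quaternion.inner_def, one_mul, Quaternion.re_star]
  rw [norm_sub_sq_real, norm_sub_sq_real, hinner, norm_one, norm_mul, Quaternion.norm_star]
  ring

lemma abs_norm_sub_norm_mul_le (p α : ℍ) (hp : ‖p‖ ≤ 1) (hα : ‖α‖ ≤ 1) :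
    |‖p‖ - ‖α‖| * ‖1 - p * star α‖ ≤ ‖p - α‖ * (1 - ‖p‖ * ‖α‖) := by
  have hid := norm_one_sub_mul_star_sq_sub_norm_sub_sq p α
  have hden : 1 - ‖p‖ * ‖α‖ ≤ ‖1 - p * star α‖ := by
    simpa [norm_mul] using norm_sub_norm_le (1 : ℍ) (p * star α)
  have hsa : 0 ≤ 1 - ‖p‖ * ‖α‖ := by nlinarith [norm_nonneg p, norm_nonneg α]
  -- `‖p - α‖² (1 - ‖p‖‖α‖)² - (‖p‖ - ‖α‖)² ‖1 - pᾱ‖²` factors as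
  -- `(‖1 - pᾱ‖² - (1 - ‖p‖‖α‖)²) (1 - ‖p‖²) (1 - ‖α‖²)`.
  have hsq : ((‖p‖ - ‖α‖) * ‖1 - p * star α‖) ^ 2 ≤ (‖p - α‖ * (1 - ‖p‖ * ‖α‖)) ^ 2 := by
    have h1 : 0 ≤ ‖1 - p * star α‖ ^ 2 - (1 - ‖p‖ * ‖α‖) ^ 2 := by nlinarith
    have h2 : 0 ≤ (1 - ‖p‖ ^ 2) * (1 - ‖α‖ ^ 2) := by
      apply mul_nonneg <;> nlinarith [norm_nonneg p, norm_nonneg α]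
    nlinarith [mul_nonneg h1 h2]
  calc |‖p‖ - ‖α‖| * ‖1 - p * star α‖ = |(‖p‖ - ‖α‖) * ‖1 - p * star α‖| := by
        rw [abs_mul, abs_norm]
    _ ≤ |‖p - α‖ * (1 - ‖p‖ * ‖α‖)| := sq_le_sq.mp hsq
    _ = ‖p - α‖ * (1 - ‖p‖ * ‖α‖) := abs_of_nonneg (by positivity)

lemma exists_norm_eq_pRho_eq_div (q α : ℍ) (h : q * α ≠ 1) :
    ∃ p : ℍ, ‖p‖ = ‖q‖ ∧ pRho q α = ‖p - α‖ / ‖1 - p * star α‖ := by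
  set u : ℍ := 1 - q * α with hu_def
  have hu : u ≠ 0 := sub_ne_zero.mpr (Ne.symm h)
  have hu' : ‖u‖ ≠ 0 := norm_ne_zero_iff.mpr hu
  -- conjugating `q` by `u` pulls `u` out on the left of both numerator and denominator
  refine ⟨u⁻¹ * q * u, by rw [norm_mul, norm_mul, norm_inv]; field_simp, ?_⟩
  have hup : u * (u⁻¹ * q * u) = q * u := by
    rw [← mul_assoc, ← mul_assoc, mul_inv_cancel₀ hu, one_mul]
  have hnum : -α + q * (1 + α ^ 2) - q ^ 2 * α = u * (u⁻¹ * q * u - α) := by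
    rw [mul_sub, hup, hu_def]
    noncomm_ring
  have hden : 1 - (2 * α.re) • q + (‖α‖ ^ 2) • q ^ 2 = u * (1 - u⁻¹ * q * u * star α) := by
    have htrace : (2 * α.re) • q = q * (α + star α) := by
      rw [Quaternion.self_add_star', ← Quaternion.coe_mul_eq_smul, Quaternion.coe_commutes]
    have hnorm : (‖α‖ ^ 2) • q ^ 2 = q ^ 2 * (α * star α) := by
      rw [Quaternion.self_mul_star, ← Quaternion.coe_commutes, Quaternion.coe_mul_eq_smul,
        Quaternion.normSq_eq_norm_mul_self, sq]
    rw [mul_sub, ← mul_assoc, hup, htrace, hnorm, hu_def]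
    noncomm_ring
  rw [pRho, hnum, hden, mul_inv_rev, mul_assoc, inv_mul_cancel_left₀ hu, norm_mul, norm_inv,
    div_eq_inv_mul]

lemma abs_norm_sub_norm_le_pRho_mul {q α : ℍ} (hq : ‖q‖ < 1) (hα : ‖α‖ < 1) :
    |‖q‖ - ‖α‖| ≤ pRho q α * (1 - ‖q‖ * ‖α‖) := by
  have hqα : ‖q‖ * ‖α‖ < 1 := by nlinarith [norm_nonneg q, norm_nonneg α]
  obtain ⟨p, hp, hρ⟩ := exists_norm_eq_pRho_eq_div q α fun h => by
    simpa [h] using (norm_mul q α).trans_lt hqα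
  have hden : 0 < ‖1 - p * star α‖ := by
    refine lt_of_lt_of_le ?_ (norm_sub_norm_le (1 : ℍ) (p * star α))
    simpa [norm_mul, hp] using hqα
  rw [hρ, div_mul_eq_mul_div, le_div_iff₀ hden, ← hp]
  exact abs_norm_sub_norm_mul_le p α (hp ▸ hq.le) hα.le

lemma one_sub_mul_le_one_add_mul_of_sub_le {s a r : ℝ} (hs : s ≤ 1) (ha : a ≤ 1) (hr : 0 ≤ r)
    (h : a - s ≤ r * (1 - s * a)) : (1 - r) * (1 - s) ≤ (1 + r) * (1 - a) := by
  nlinarith [mul_nonneg hr (mul_nonneg (sub_nonneg.mpr hs) (sub_nonneg.mpr ha))]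

/-- There is a constant `C₁` such that for every `α ∈ 𝔹`, `r ∈ (0,1)` and `q ∈ B(α,r)`,
`((1−r)/C₁)(1−|α|) ≤ 1−|q| ≤ (C₁/(1−r))(1−|α|)`. -/
theorem pBall_dist_boundary_comparable :
    ∃ C₁ : ℝ, 0 < C₁ ∧ ∀ α ∈ B1, ∀ r ∈ Set.Ioo (0 : ℝ) 1, ∀ q ∈ pBall α r,
      ((1 - r) / C₁) * (1 - ‖α‖) ≤ 1 - ‖q‖ ∧ 1 - ‖q‖ ≤ (C₁ / (1 - r)) * (1 - ‖α‖) := by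
  refine ⟨2, two_pos, fun α hα r ⟨hr0, hr1⟩ q ⟨hq, hρ⟩ => ?_⟩
  rw [B1, mem_ball_zero_iff] at hα hq
  have hsa : 0 ≤ 1 - ‖q‖ * ‖α‖ := by nlinarith [norm_nonneg q, norm_nonneg α]
  have hclose : |‖q‖ - ‖α‖| ≤ r * (1 - ‖q‖ * ‖α‖) :=
    (abs_norm_sub_norm_le_pRho_mul hq hα).trans (mul_le_mul_of_nonneg_right hρ.le hsa)
  obtain ⟨hclose₁, hclose₂⟩ := abs_le.mp hclose
  have hlow := one_sub_mul_le_one_add_mul_of_sub_le hα.le hq.le hr0.le (by rwa [mul_comm ‖α‖])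
  have hup := one_sub_mul_le_one_add_mul_of_sub_le hq.le hα.le hr0.le (by linarith)
  constructor
  · nlinarith
  · rw [div_mul_eq_mul_div, le_div_iff₀ (by linarith)]
    nlinarith

end
end

section
/- Let p > 0 and fix i ∈ 𝕊. The 2-dimensional Lebesgue measure λ_i on 𝔹_i = 𝔹 ∩ ℂ_i, regarded as a Borel measure on 𝔹, is a Carleson measure for 𝒜^p(𝔹), and yet for every r ∈ (0,1) there is a constant c(r) > 0 such that λ_i(B(α,r)) ≥ c(r)·d⁴ for every α ∈ 𝔹_i, where d = (1 − |α|²)^{1/2}; hence for no exponent β > 4 can every Carleson measure μ for 𝒜^p(𝔹) satisfy μ(B(α,r)) ≤ C(r)·d^β for all α ∈ 𝔹. -/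
open MeasureTheory Filter Set
open scoped ENNReal

noncomputable section

/-!
On the slice `ℂ_i` the pseudohyperbolic distance is the classical one of the unit disc,
`ρ(z, w) = |z - w| / |1 - z w̄|`, so `B(α, r) ∩ ℂ_i` contains a Euclidean disc of radius
comparable to `1 - |α|²` and `λ_i(B(α, r)) ≳ (1 - |α|²)²`. On the other hand `λ_i` is a
Carleson measure with constant `1`, because `∫_{𝔹_i} |f|^p dλ` is one of the integrals whose
supremum is `∥f∥_{𝒜^p}^p`. A bound `λ_i(B(α, r)) ≲ (1 - |α|²)^{β/2}` with `β > 4` is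
incompatible with the lower bound as `α` tends to the boundary along `ℂ_i`.
-/

open ComplexConjugate

theorem one_sub_mul_conj_mul_one_sub_mul (z w : ℂ) :
    (1 - z * conj w) * (1 - z * w) = 1 - (2 * w.re) • z + (‖w‖ ^ 2) • z ^ 2 := by
  rw [Complex.real_smul, Complex.real_smul, Complex.sq_norm]
  linear_combination (-z) * Complex.add_conj w + z ^ 2 * Complex.mul_conj w

theorem ball_subset_pseudoDisc {w : ℂ} (hw : ‖w‖ < 1) {r : ℝ} (hr0 : 0 ≤ r)
    (hr1 : r ≤ 1) :
    Metric.ball w (r / (1 + r) * (1 - ‖w‖ ^ 2)) ⊆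
      {z | ‖z‖ < 1 ∧ ‖z - w‖ < r * ‖1 - z * conj w‖} := by
  intro z hz
  rw [Metric.mem_ball, dist_eq_norm] at hz
  have hd : (1 + r) * ‖z - w‖ < r * (1 - ‖w‖ ^ 2) := by
    rw [div_mul_eq_mul_div, lt_div_iff₀ (by linarith)] at hz
    linarith
  have hw0 := norm_nonneg w
  have hzw0 := norm_nonneg (z - w)
  have hden : (1 - ‖w‖ ^ 2) - ‖z - w‖ ≤ ‖1 - z * conj w‖ := by
    have key : 1 - z * conj w = ((1 - ‖w‖ ^ 2 : ℝ) : ℂ) - (z - w) * conj w := by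
      rw [Complex.ofReal_sub, Complex.ofReal_one, ← Complex.normSq_eq_norm_sq,
        ← Complex.mul_conj]
      ring
    calc (1 - ‖w‖ ^ 2) - ‖z - w‖
        ≤ ‖((1 - ‖w‖ ^ 2 : ℝ) : ℂ)‖ - ‖(z - w) * conj w‖ := by
          rw [Complex.norm_real, Real.norm_of_nonneg (by nlinarith), norm_mul,
            Complex.norm_conj]
          nlinarith
      _ ≤ ‖1 - z * conj w‖ := key ▸ norm_sub_norm_le _ _
  refine ⟨?_, by nlinarith⟩
  have hrw : r * (1 - ‖w‖ ^ 2) ≤ (1 + r) * (1 - ‖w‖) := by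
    have : r * ‖w‖ ≤ 1 := by nlinarith
    nlinarith [mul_nonneg (sub_nonneg.2 hw.le) (sub_nonneg.2 this)]
  calc ‖z‖ ≤ ‖w‖ + ‖z - w‖ := by simpa using norm_add_le w (z - w)
    _ < 1 := by nlinarith

theorem not_forall_mul_sq_le_mul_rpow {c C γ : ℝ} (hc : 0 < c) (hγ : 2 < γ) :
    ¬ ∀ u ∈ Set.Ioo (0 : ℝ) 1, c * u ^ 2 ≤ C * u ^ γ := by
  intro h
  have hlim : Tendsto (fun u : ℝ => C * u ^ (γ - 2)) (nhdsWithin 0 (Set.Ioi 0)) (nhds 0) := by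
    have := ((Real.continuousAt_rpow_const 0 (γ - 2) (Or.inr (by linarith))).tendsto).const_mul C
    rw [Real.zero_rpow (by linarith), mul_zero] at this
    exact this.mono_left nhdsWithin_le_nhds
  obtain ⟨u, hsmall, hu⟩ :=
    ((hlim.eventually (gt_mem_nhds hc)).and (Ioo_mem_nhdsGT one_pos)).exists
  have hsplit : u ^ γ = u ^ (γ - 2) * u ^ 2 := by
    rw [← Real.rpow_natCast, ← Real.rpow_add hu.1]
    norm_num
  refine (h u hu).not_gt ?_
  rw [hsplit, ← mul_assoc]
  exact mul_lt_mul_of_pos_right hsmall (pow_pos hu.1 2)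

theorem re_eq_zero_of_mem_sph {i : ℍ} (hi : i ∈ Sph) : i.re = 0 := by
  have hsq : i * i = -1 := by rw [← sq]; exact hi
  have hre := congrArg QuaternionAlgebra.re hsq
  have hI := congrArg QuaternionAlgebra.imI hsq
  have hJ := congrArg QuaternionAlgebra.imJ hsq
  have hK := congrArg QuaternionAlgebra.imK hsq
  simp only [Quaternion.re_mul, Quaternion.imI_mul, Quaternion.imJ_mul, Quaternion.imK_mul,
    Quaternion.re_neg, Quaternion.imI_neg, Quaternion.imJ_neg, Quaternion.imK_neg,
    Quaternion.re_one, Quaternion.imI_one, Quaternion.imJ_one, Quaternion.imK_one] at hre hI hJ hK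
  nlinarith [sq_nonneg i.re, sq_nonneg i.imI, sq_nonneg i.imJ, sq_nonneg i.imK]

def sliceEmb {i : ℍ} (hi : i ∈ Sph) : ℂ →ₐ[ℝ] ℍ :=
  Complex.liftAux i (by rw [← sq]; exact hi)

theorem measurableSet_B1 : MeasurableSet B1 := Metric.isOpen_ball.measurableSet

theorem sliceLeb_compl_B1 (i : ℍ) : sliceLeb i B1ᶜ = 0 := by
  rw [sliceLeb, Measure.restrict_apply measurableSet_B1.compl, Set.compl_inter_self,
    measure_empty]

theorem exists_mem_B1_inter_CPlane_one_sub_norm_sq_eq (i : ℍ) {u : ℝ}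
    (hu : u ∈ Set.Ioo (0 : ℝ) 1) : ∃ α ∈ B1 ∩ CPlane i, 1 - ‖α‖ ^ 2 = u := by
  have hsq : Real.sqrt (1 - u) ^ 2 = 1 - u := Real.sq_sqrt (by linarith [hu.2])
  have hnorm : ‖((Real.sqrt (1 - u) : ℝ) : ℍ)‖ ^ 2 = 1 - u := by
    rw [Quaternion.norm_coe, Real.norm_eq_abs, sq_abs, hsq]
  refine ⟨(Real.sqrt (1 - u) : ℍ), ⟨?_, (Real.sqrt (1 - u), 0), by simp [toSlice]⟩,
    by linarith⟩
  rw [B1, mem_ball_zero_iff, ← sq_lt_one_iff₀ (norm_nonneg _), hnorm]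
  linarith [hu.1]

section sliceEmb

variable {i : ℍ}

theorem sliceEmb_apply (hi : i ∈ Sph) (z : ℂ) : sliceEmb hi z = (z.re : ℍ) + z.im • i := rfl

theorem toSlice_eq_sliceEmb_comp (hi : i ∈ Sph) :
    toSlice i = sliceEmb hi ∘ Complex.measurableEquivRealProd.symm := rfl

theorem range_sliceEmb (hi : i ∈ Sph) : Set.range (sliceEmb hi) = CPlane i := by
  rw [CPlane, toSlice_eq_sliceEmb_comp hi,
    Complex.measurableEquivRealProd.symm.surjective.range_comp]

theorem star_sliceEmb (hi : i ∈ Sph) (z : ℂ) : star (sliceEmb hi z) = sliceEmb hi (conj z) := by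
  have hstar : star i = -i := Quaternion.star_eq_neg.2 (re_eq_zero_of_mem_sph hi)
  simp [sliceEmb_apply, hstar]

theorem normSq_sliceEmb (hi : i ∈ Sph) (z : ℂ) :
    Quaternion.normSq (sliceEmb hi z) = Complex.normSq z := by
  have h : ((Quaternion.normSq (sliceEmb hi z) : ℝ) : ℍ) = (Complex.normSq z : ℍ) := by
    rw [← Quaternion.self_mul_star, star_sliceEmb, ← map_mul, Complex.mul_conj]
    exact AlgHom.commutes (sliceEmb hi) _
  exact Quaternion.coe_injective h

theorem norm_sliceEmb (hi : i ∈ Sph) (z : ℂ) : ‖sliceEmb hi z‖ = ‖z‖ := by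
  rw [← sq_eq_sq₀ (norm_nonneg _) (norm_nonneg _), sq, ← Quaternion.normSq_eq_norm_mul_self,
    normSq_sliceEmb, Complex.normSq_eq_norm_sq]

theorem isometry_sliceEmb (hi : i ∈ Sph) : Isometry (sliceEmb hi) :=
  AddMonoidHomClass.isometry_of_norm _ (norm_sliceEmb hi)

theorem sliceEmb_mem_B1 (hi : i ∈ Sph) {z : ℂ} : sliceEmb hi z ∈ B1 ↔ ‖z‖ < 1 := by
  rw [B1, mem_ball_zero_iff, norm_sliceEmb]

theorem preimage_sliceEmb_B1 (hi : i ∈ Sph) : sliceEmb hi ⁻¹' B1 = Metric.ball 0 1 :=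
  Set.ext fun _ => (sliceEmb_mem_B1 hi).trans mem_ball_zero_iff.symm

theorem preimage_toSlice_B1 (hi : i ∈ Sph) : toSlice i ⁻¹' B1 = unitDisc2 := by
  ext z
  rw [toSlice_eq_sliceEmb_comp hi, Set.preimage_comp, preimage_sliceEmb_B1]
  simp [unitDisc2, ← sq_lt_one_iff₀ (norm_nonneg _), Complex.sq_norm, Complex.normSq_apply,
    ← sq]

theorem pRho_sliceEmb (hi : i ∈ Sph) {z w : ℂ} (hzw : z * w ≠ 1) :
    pRho (sliceEmb hi z) (sliceEmb hi w) = ‖z - w‖ / ‖1 - z * conj w‖ := by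
  set φ := sliceEmb hi
  have hre : (φ w).re = w.re := by simp [φ, sliceEmb_apply, re_eq_zero_of_mem_sph hi]
  have hden : 1 - (2 * (φ w).re) • φ z + (‖φ w‖ ^ 2) • φ z ^ 2
      = φ ((1 - z * conj w) * (1 - z * w)) := by
    rw [one_sub_mul_conj_mul_one_sub_mul, hre, norm_sliceEmb]
    simp only [map_sub, map_add, map_one, map_smul, map_pow]
  have hnum : -φ w + φ z * (1 + φ w ^ 2) - φ z ^ 2 * φ w = φ ((1 - z * w) * (z - w)) := by
    rw [show (1 - z * w) * (z - w) = -w + z * (1 + w ^ 2) - z ^ 2 * w by ring]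
    simp only [map_sub, map_add, map_neg, map_mul, map_one, map_pow]
  have hcancel : ((1 - z * conj w) * (1 - z * w))⁻¹ * ((1 - z * w) * (z - w))
      = (z - w) / (1 - z * conj w) := by
    rw [mul_inv, mul_assoc, inv_mul_cancel_left₀ (sub_ne_zero.2 (Ne.symm hzw)), div_eq_inv_mul]
  rw [pRho, hden, hnum, ← map_inv₀, ← map_mul, norm_sliceEmb, hcancel, norm_div]

theorem measurableEmbedding_sliceEmb (hi : i ∈ Sph) : MeasurableEmbedding (sliceEmb hi) :=
  (isometry_sliceEmb hi).isClosedEmbedding.measurableEmbedding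

theorem measurableEmbedding_toSlice (hi : i ∈ Sph) : MeasurableEmbedding (toSlice i) := by
  rw [toSlice_eq_sliceEmb_comp hi]
  exact (measurableEmbedding_sliceEmb hi).comp
    Complex.measurableEquivRealProd.symm.measurableEmbedding

theorem map_toSlice_volume (hi : i ∈ Sph) :
    (volume : Measure (ℝ × ℝ)).map (toSlice i) = volume.map (sliceEmb hi) := by
  rw [toSlice_eq_sliceEmb_comp hi, ← Measure.map_map (measurableEmbedding_sliceEmb hi).measurable
    Complex.measurableEquivRealProd.symm.measurable,
    Complex.volume_preserving_equiv_real_prod.symm.map_eq]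

theorem sliceLeb_apply (hi : i ∈ Sph) (S : Set ℍ) :
    sliceLeb i S = volume (sliceEmb hi ⁻¹' (S ∩ B1)) := by
  rw [sliceLeb, Measure.restrict_apply' measurableSet_B1, map_toSlice_volume hi,
    (measurableEmbedding_sliceEmb hi).map_apply]

theorem isFiniteMeasure_sliceLeb (hi : i ∈ Sph) : IsFiniteMeasure (sliceLeb i) :=
  ⟨by rw [sliceLeb_apply hi, Set.univ_inter, preimage_sliceEmb_B1]; exact measure_ball_lt_top⟩

theorem lintegral_sliceLeb (hi : i ∈ Sph) (g : ℍ → ℝ≥0∞) :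
    ∫⁻ q in B1, g q ∂sliceLeb i = ∫⁻ z in unitDisc2, g (toSlice i z) := by
  rw [sliceLeb, Measure.restrict_restrict measurableSet_B1, Set.inter_self,
    (measurableEmbedding_toSlice hi).restrict_map, preimage_toSlice_B1 hi,
    (measurableEmbedding_toSlice hi).lintegral_map]

theorem isCarlesonBerg_sliceLeb (hi : i ∈ Sph) (p : ℝ) : IsCarlesonBerg (sliceLeb i) p :=
  ⟨1, one_pos, fun f _ => by
    rw [lintegral_sliceLeb hi, ENNReal.ofReal_one, one_mul]
    exact le_iSup₂ (f := fun I _ => sliceIntP f p I) i hi⟩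

theorem le_sliceLeb_pBall (hi : i ∈ Sph) {r : ℝ} (hr0 : 0 ≤ r) (hr1 : r ≤ 1) {α : ℍ}
    (hα : α ∈ B1 ∩ CPlane i) :
    ENNReal.ofReal (Real.pi * (r / (1 + r)) ^ 2 * (1 - ‖α‖ ^ 2) ^ 2) ≤
      sliceLeb i (pBall α r) := by
  obtain ⟨hαB, hαC⟩ := hα
  rw [← range_sliceEmb hi] at hαC
  obtain ⟨w, rfl⟩ := hαC
  rw [sliceEmb_mem_B1] at hαB
  have hsub : Metric.ball w (r / (1 + r) * (1 - ‖w‖ ^ 2)) ⊆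
      sliceEmb hi ⁻¹' (pBall (sliceEmb hi w) r ∩ B1) := by
    intro z hz
    obtain ⟨hz1, hzr⟩ := ball_subset_pseudoDisc hαB hr0 hr1 hz
    have hzB : sliceEmb hi z ∈ B1 := (sliceEmb_mem_B1 hi).2 hz1
    have hzw : z * w ≠ 1 := fun h => by
      have := mul_lt_one_of_nonneg_of_lt_one_left (norm_nonneg z) hz1 hαB.le
      rw [← norm_mul, h, norm_one] at this
      exact this.false
    have hpos : 0 < ‖1 - z * conj w‖ := pos_of_mul_pos_right ((norm_nonneg _).trans_lt hzr) hr0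
    refine ⟨⟨hzB, ?_⟩, hzB⟩
    rw [pRho_sliceEmb hi hzw, div_lt_iff₀ hpos]
    exact hzr
  have hw2 : 0 ≤ 1 - ‖w‖ ^ 2 := by nlinarith [norm_nonneg w]
  calc ENNReal.ofReal (Real.pi * (r / (1 + r)) ^ 2 * (1 - ‖sliceEmb hi w‖ ^ 2) ^ 2)
      = volume (Metric.ball w (r / (1 + r) * (1 - ‖w‖ ^ 2))) := by
        rw [Complex.volume_ball, ← ENNReal.ofReal_pow (by positivity),
          ← ENNReal.ofReal_coe_nnreal, NNReal.coe_real_pi, ← ENNReal.ofReal_mul (by positivity),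
          norm_sliceEmb]
        ring_nf
    _ ≤ sliceLeb i (pBall (sliceEmb hi w) r) := by
        rw [sliceLeb_apply hi]
        exact measure_mono hsub

theorem exists_pos_ofReal_mul_le_sliceLeb_pBall (hi : i ∈ Sph) {r : ℝ}
    (hr : r ∈ Set.Ioo (0 : ℝ) 1) :
    ∃ c : ℝ, 0 < c ∧ ∀ α ∈ B1 ∩ CPlane i,
      ENNReal.ofReal (c * (1 - ‖α‖ ^ 2) ^ 2) ≤ sliceLeb i (pBall α r) :=
  ⟨Real.pi * (r / (1 + r)) ^ 2, by have := hr.1; positivity,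
    fun _ hα => le_sliceLeb_pBall hi hr.1.le hr.2.le hα⟩

end sliceEmb

theorem exponent_four_sharp_general (p : ℝ) (i : ℍ) (hi : i ∈ Sph) :
    IsFiniteMeasure (sliceLeb i) ∧ sliceLeb i B1ᶜ = 0 ∧ IsCarlesonBerg (sliceLeb i) p ∧
    (∀ r ∈ Set.Ioo (0 : ℝ) 1, ∃ c : ℝ, 0 < c ∧ ∀ α ∈ B1 ∩ CPlane i,
      ENNReal.ofReal (c * (1 - ‖α‖ ^ 2) ^ 2) ≤ sliceLeb i (pBall α r)) ∧
    ∀ β : ℝ, 4 < β →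
      ¬ ∀ μ : Measure ℍ, IsFiniteMeasure μ → μ B1ᶜ = 0 → IsCarlesonBerg μ p →
        ∀ r ∈ Set.Ioo (0 : ℝ) 1, ∃ C : ℝ, 0 < C ∧ ∀ α ∈ B1,
          μ (pBall α r) ≤ ENNReal.ofReal (C * (1 - ‖α‖ ^ 2) ^ (β / 2)) := by
  have hfin := isFiniteMeasure_sliceLeb hi
  have hcarleson := isCarlesonBerg_sliceLeb hi p
  have hlower := fun r (hr : r ∈ Set.Ioo (0 : ℝ) 1) =>
    exists_pos_ofReal_mul_le_sliceLeb_pBall hi hr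
  refine ⟨hfin, sliceLeb_compl_B1 i, hcarleson, hlower, fun β hβ hupper => ?_⟩
  obtain ⟨C, hC0, hC⟩ := hupper _ hfin (sliceLeb_compl_B1 i) hcarleson (1 / 2) (by norm_num)
  obtain ⟨c, hc, hc'⟩ := hlower (1 / 2) (by norm_num)
  refine not_forall_mul_sq_le_mul_rpow (C := C) hc (by linarith : 2 < β / 2) fun u hu => ?_
  obtain ⟨α, hα, rfl⟩ := exists_mem_B1_inter_CPlane_one_sub_norm_sq_eq i hu
  exact (ENNReal.ofReal_le_ofReal_iff (mul_nonneg hC0.le (Real.rpow_nonneg hu.1.le _))).1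
    ((hc' α hα).trans (hC α hα.1))

/-- The 2-dimensional Lebesgue measure `λ_i` on `𝔹_i`, viewed as a Borel measure on `𝔹`, is a
(finite) Carleson measure for `𝒜^p(𝔹)` with `λ_i(B(α,r)) ≥ c(r) d⁴` for `α ∈ 𝔹_i`; hence no
exponent `β > 4` can make `μ(B(α,r)) ≤ C(r) d^β` hold for every Carleson measure `μ`. -/
theorem exponent_four_sharp (p : ℝ) (hp : 0 < p) (i : ℍ) (hi : i ∈ Sph) :
    IsFiniteMeasure (sliceLeb i) ∧ sliceLeb i B1ᶜ = 0 ∧ IsCarlesonBerg (sliceLeb i) p ∧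
    (∀ r ∈ Set.Ioo (0 : ℝ) 1, ∃ c : ℝ, 0 < c ∧ ∀ α ∈ B1 ∩ CPlane i,
      ENNReal.ofReal (c * (1 - ‖α‖ ^ 2) ^ 2) ≤ sliceLeb i (pBall α r)) ∧
    ∀ β : ℝ, 4 < β →
      ¬ ∀ μ : Measure ℍ, IsFiniteMeasure μ → μ B1ᶜ = 0 → IsCarlesonBerg μ p →
        ∀ r ∈ Set.Ioo (0 : ℝ) 1, ∃ C : ℝ, 0 < C ∧ ∀ α ∈ B1,
          μ (pBall α r) ≤ ENNReal.ofReal (C * (1 - ‖α‖ ^ 2) ^ (β / 2)) :=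
  exponent_four_sharp_general p i hi

end
end
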